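/- For any vector of 1-forms τ = (τ₁,...,τ₆) and 1-form μ, the matrix-valued 2-forms satisfy [τ]₂ ∧ [μ]₁ - [μ]₁ ∧ [τ]₂ = 0 and [τ]₂ ∧ [μ]₁ + [[μ]₁ ∧ τ]₂ = 0, where [μ]₁ has entries κ_{ij} μ and [τ]₂ has entries ε_{ijp} τ_p. -/

import Mathlib

/-!
Moving `μ` past each `τ_p` (they anticommute) writes every entry of both identities as
`∑ p, c_p • (τ_p ∧ μ)`, where each `c_p` is a combination of contractions of `κ` into one slot
of `ε`. Since `Ω₀` has type `(3,0) + (0,3)` for the complex structure defined by `κ₀`, these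
contractions agree whichever slot of `ε` is used, and the coefficients vanish. Only the equality
for the second and third slots is checked by computation; the first slot reduces to it by the
cyclic symmetry of `ε` and the antisymmetry of `κ`.
-/

noncomputable section

/-- The coefficient array `κ_{ij}` of `κ₀ = e^{12}+e^{34}+e^{56}` (0-based indices). -/
def kap : Fin 6 → Fin 6 → ℝ := fun i j =>
  if (i = 0 ∧ j = 1) ∨ (i = 2 ∧ j = 3) ∨ (i = 4 ∧ j = 5) then 1
  else if (i = 1 ∧ j = 0) ∨ (i = 3 ∧ j = 2) ∨ (i = 5 ∧ j = 4) then -1 else 0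

/-- Values of `ε` on the strictly increasing triples (0-based):
`Ω₀ = e^{135}-e^{146}-e^{245}-e^{236}`. -/
def epsBase : Fin 6 → Fin 6 → Fin 6 → ℝ := fun i j k =>
  if i = 0 ∧ j = 2 ∧ k = 4 then 1
  else if i = 0 ∧ j = 3 ∧ k = 5 then -1
  else if i = 1 ∧ j = 3 ∧ k = 4 then -1
  else if i = 1 ∧ j = 2 ∧ k = 5 then -1 else 0

/-- Values of `ε̄` on the strictly increasing triples (0-based):
`J₀Ω₀ = -e^{246}+e^{235}+e^{145}+e^{136}`. -/
def epsbarBase : Fin 6 → Fin 6 → Fin 6 → ℝ := fun i j k =>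
  if i = 1 ∧ j = 3 ∧ k = 5 then -1
  else if i = 1 ∧ j = 2 ∧ k = 4 then 1
  else if i = 0 ∧ j = 3 ∧ k = 4 then 1
  else if i = 0 ∧ j = 2 ∧ k = 5 then 1 else 0

/-- Totally antisymmetric extension of a coefficient array supported on
strictly increasing triples. -/
def antisym3 (b : Fin 6 → Fin 6 → Fin 6 → ℝ) : Fin 6 → Fin 6 → Fin 6 → ℝ := fun i j k =>
  ∑ σ : Equiv.Perm (Fin 3),
    ((Equiv.Perm.sign σ : ℤ) : ℝ) * b (![i, j, k] (σ 0)) (![i, j, k] (σ 1)) (![i, j, k] (σ 2))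

/-- The totally antisymmetric array `ε_{ijk}` with `Ω₀ = (1/6) ε_{ijk} e^{ijk}`. -/
def eps : Fin 6 → Fin 6 → Fin 6 → ℝ := antisym3 epsBase

/-- The totally antisymmetric array `ε̄_{ijk}` with `J₀Ω₀ = (1/6) ε̄_{ijk} e^{ijk}`. -/
def epsbar : Fin 6 → Fin 6 → Fin 6 → ℝ := antisym3 epsbarBase

/-- Kronecker delta `δ_{ij}`. -/
def kron (i j : Fin 6) : ℝ := if i = j then 1 else 0

open ExteriorAlgebra

variable {M : Type*} [AddCommGroup M] [Module ℝ M]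

section

variable {R N n : Type*} [CommRing R] [AddCommGroup N] [Module R N] [Fintype n]

theorem ExteriorAlgebra.ι_mul_ι_swap (x y : N) : ι R x * ι R y = -(ι R y * ι R x) :=
  eq_neg_of_add_eq_zero_left (ι_add_mul_swap x y)

theorem sum_sum_smul_ι_mul_smul_ι (a : n → n → R) (c : n → R) (τ : n → N) (μ : N) :
    ∑ k, (∑ p, a k p • ι R (τ p)) * (c k • ι R μ)
      = ∑ p, (∑ k, a k p * c k) • (ι R (τ p) * ι R μ) := by
  simp only [Finset.sum_mul, smul_mul_smul_comm, Finset.sum_smul]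
  exact Finset.sum_comm

theorem sum_smul_ι_mul_sum_smul_ι (c : n → R) (a : n → n → R) (τ : n → N) (μ : N) :
    ∑ k, (c k • ι R μ) * (∑ p, a k p • ι R (τ p))
      = -∑ p, (∑ k, c k * a k p) • (ι R (τ p) * ι R μ) := by
  simp only [Finset.mul_sum, smul_mul_smul_comm, ι_mul_ι_swap μ, smul_neg, Finset.sum_neg_distrib,
    Finset.sum_smul]
  rw [Finset.sum_comm]

theorem sum_smul_sum_smul_ι_mul_ι (a : n → R) (c : n → n → R) (τ : n → N) (μ : N) :
    ∑ p, a p • ∑ q, c p q • (ι R μ * ι R (τ q))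
      = -∑ q, (∑ p, a p * c p q) • (ι R (τ q) * ι R μ) := by
  simp only [Finset.smul_sum, smul_smul, ι_mul_ι_swap μ, smul_neg, Finset.sum_neg_distrib,
    Finset.sum_smul]
  rw [Finset.sum_comm]

end

theorem antisym3_apply (b : Fin 6 → Fin 6 → Fin 6 → ℝ) (i j k : Fin 6) :
    antisym3 b i j k = b i j k - b j i k - b k j i - b i k j + b j k i + b k i j := by
  have huniv : (Finset.univ : Finset (Equiv.Perm (Fin 3))) =
      {1, Equiv.swap 0 1, Equiv.swap 0 2, Equiv.swap 1 2, finRotate 3, finRotate 3 ^ 2} := by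
    decide
  rw [antisym3, huniv, Finset.sum_insert (by decide), Finset.sum_insert (by decide),
    Finset.sum_insert (by decide), Finset.sum_insert (by decide),
    Finset.sum_insert (by decide), Finset.sum_singleton]
  simp +decide [Equiv.swap_apply_of_ne_of_ne, sq, Equiv.Perm.mul_apply]
  ring

theorem eps_rotate (i j k : Fin 6) : eps i j k = eps j k i := by
  simp only [eps, antisym3_apply]
  ring

theorem kap_antisymm (i j : Fin 6) : kap j i = -kap i j := by
  fin_cases i <;> fin_cases j <;> simp [kap]

theorem sum_eps_mul_kap_eq_sum_eps_mul_kap (i j p : Fin 6) :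
    ∑ k, eps i k p * kap k j = ∑ k, eps i j k * kap k p := by
  fin_cases i <;> fin_cases j <;> fin_cases p <;>
    simp [eps, antisym3_apply, epsBase, kap]

theorem sum_eps_mul_kap_add_sum_kap_mul_eps (i j p : Fin 6) :
    ∑ k, eps i k p * kap k j + ∑ k, kap i k * eps k j p = 0 := by
  have hfirst : ∑ k, kap i k * eps k j p = -∑ k, eps i k p * kap k j :=
    calc ∑ k, kap i k * eps k j p = -∑ k, eps j p k * kap k i := by
          simp only [kap_antisymm i, eps_rotate _ j p, ← Finset.sum_neg_distrib]
          exact Finset.sum_congr rfl fun k _ => by ring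
      _ = -∑ k, eps i j k * kap k p := by
          simp only [← sum_eps_mul_kap_eq_sum_eps_mul_kap j p i, ← eps_rotate i j]
      _ = -∑ k, eps i k p * kap k j := by rw [sum_eps_mul_kap_eq_sum_eps_mul_kap]
  rw [hfirst, add_neg_cancel]

/-- For any vector of 1-forms `τ = (τ₁,…,τ₆)` and any 1-form `μ`:
`[τ]₂ ∧ [μ]₁ - [μ]₁ ∧ [τ]₂ = 0` and `[τ]₂ ∧ [μ]₁ + [[μ]₁ ∧ τ]₂ = 0`,
where `[μ]₁` has entries `κ_{ij} μ`, `[τ]₂` has entries `ε_{ijp} τ_p`,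
matrix products use the wedge product entrywise, and `[μ]₁ ∧ τ` is the vector
of 2-forms with `i`-th entry `κ_{ij} μ ∧ τ_j`. -/
theorem bracket2_bracket1_identities (τ : Fin 6 → M) (μ : M) :
    (∀ i j,
      (∑ k, (∑ p, eps i k p • ExteriorAlgebra.ι ℝ (τ p)) * (kap k j • ExteriorAlgebra.ι ℝ μ))
        - (∑ k, (kap i k • ExteriorAlgebra.ι ℝ μ) * (∑ p, eps k j p • ExteriorAlgebra.ι ℝ (τ p)))
        = 0) ∧
    (∀ i j,
      (∑ k, (∑ p, eps i k p • ExteriorAlgebra.ι ℝ (τ p)) * (kap k j • ExteriorAlgebra.ι ℝ μ))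
        + (∑ p, eps i j p •
            (∑ q, kap p q • (ExteriorAlgebra.ι ℝ μ * ExteriorAlgebra.ι ℝ (τ q))))
        = 0) := by
  refine ⟨fun i j => ?_, fun i j => ?_⟩
  · rw [sum_sum_smul_ι_mul_smul_ι, sum_smul_ι_mul_sum_smul_ι, sub_neg_eq_add,
      ← Finset.sum_add_distrib]
    refine Finset.sum_eq_zero fun p _ => ?_
    rw [← add_smul, sum_eps_mul_kap_add_sum_kap_mul_eps, zero_smul]
  · rw [sum_sum_smul_ι_mul_smul_ι, sum_smul_sum_smul_ι_mul_ι, ← sub_eq_add_neg, sub_eq_zero]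
    simp only [sum_eps_mul_kap_eq_sum_eps_mul_kap]

end
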